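/- Let G be a finite simple connected graph, let a, b, c ∈ V(G) be three vertices each of degree one in G, and let H be a connected induced subgraph of G containing a, b, c whose vertex set is minimal with respect to inclusion among connected induced subgraphs containing a, b, c. Then either H is a subdivision of K_{1,3} with a, b, c as its three vertices of degree one, or H contains a triangle. -/

import Mathlib

open SimpleGraph

/-- `G` contains a subdivision of `K₄` as a (not necessarily induced) subgraph:
there are four branch vertices joined by six pairwise internally disjoint paths. -/
def HasK4Subdivision {V : Type*} (G : SimpleGraph V) : Prop :=
  ∃ b : Fin 4 → V, Function.Injective b ∧
    ∃ P : ∀ i j : Fin 4, i < j → G.Walk (b i) (b j),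
      (∀ (i j : Fin 4) (hij : i < j), (P i j hij).IsPath) ∧
      (∀ (i j : Fin 4) (hij : i < j) (k l : Fin 4) (hkl : k < l), (i, j) ≠ (k, l) → ∀ w,
        w ∈ (P i j hij).support → w ∈ (P k l hkl).support →
          (w = b i ∨ w = b j) ∧ (w = b k ∨ w = b l))

/-- A graph is series-parallel if it contains no subdivision of `K₄` as a
(not necessarily induced) subgraph. -/
def SeriesParallel {V : Type*} (G : SimpleGraph V) : Prop := ¬ HasK4Subdivision G

/-- `G` has an induced subgraph isomorphic to a subdivision of `K₄`: four branch
vertices joined by six pairwise internally disjoint paths, such that every edge of `G`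
between vertices of the union of the paths is an edge of one of the paths. -/
def HasInducedK4Subdivision {V : Type*} (G : SimpleGraph V) : Prop :=
  ∃ b : Fin 4 → V, Function.Injective b ∧
    ∃ P : ∀ i j : Fin 4, i < j → G.Walk (b i) (b j),
      (∀ (i j : Fin 4) (hij : i < j), (P i j hij).IsPath) ∧
      (∀ (i j : Fin 4) (hij : i < j) (k l : Fin 4) (hkl : k < l), (i, j) ≠ (k, l) → ∀ w,
        w ∈ (P i j hij).support → w ∈ (P k l hkl).support →
          (w = b i ∨ w = b j) ∧ (w = b k ∨ w = b l)) ∧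
      (∀ a c : V, (∃ (i j : Fin 4) (hij : i < j), a ∈ (P i j hij).support) →
        (∃ (i j : Fin 4) (hij : i < j), c ∈ (P i j hij).support) → G.Adj a c →
          ∃ (i j : Fin 4) (hij : i < j), s(a, c) ∈ (P i j hij).edges)

/-- `G` is ISK4-free: no induced subgraph of `G` is a subdivision of `K₄`. -/
def ISK4Free {V : Type*} (G : SimpleGraph V) : Prop := ¬ HasInducedK4Subdivision G

/-- `G` is triangle-free. -/
def TriangleFree {V : Type*} (G : SimpleGraph V) : Prop := G.CliqueFree 3

/-- `G` has no induced subgraph isomorphic to `K₃,₃`. -/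
def K33Free {V : Type*} (G : SimpleGraph V) : Prop :=
  ¬ ∃ a b : Fin 3 → V, Function.Injective a ∧ Function.Injective b ∧
    (∀ i j, a i ≠ b j) ∧ (∀ i j, G.Adj (a i) (b j)) ∧
    (∀ i j, ¬ G.Adj (a i) (a j)) ∧ (∀ i j, ¬ G.Adj (b i) (b j))

/-- `C` is the vertex set of an induced cycle of `G`: the induced subgraph on `C` is
connected and every vertex of `C` has exactly two neighbors in `C`. -/
def IsInducedCycle {V : Type*} (G : SimpleGraph V) (C : Set V) : Prop :=
  C.Finite ∧ 3 ≤ C.ncard ∧ (G.induce C).Connected ∧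
    ∀ v ∈ C, (G.neighborSet v ∩ C).ncard = 2

/-- A hole is an induced cycle of length at least 4. -/
def IsHole {V : Type*} (G : SimpleGraph V) (C : Set V) : Prop :=
  IsInducedCycle G C ∧ 4 ≤ C.ncard

/-- `(C, x)` is a wheel: `C` is a hole and `x` has at least three neighbors in `C`. -/
def IsWheel {V : Type*} (G : SimpleGraph V) (C : Set V) (x : V) : Prop :=
  IsHole G C ∧ x ∉ C ∧ 3 ≤ (G.neighborSet x ∩ C).ncard

/-- The number of spokes of the wheel `(C, x)`. -/
noncomputable def numSpokes {V : Type*} (G : SimpleGraph V) (C : Set V) (x : V) : ℕ :=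
  (G.neighborSet x ∩ C).ncard

/-- `S` is (the vertex set of) a sector of the wheel `(C, x)`: a maximal path of the
hole `C` containing no spoke (neighbor of `x`) in its interior.  Here this is rendered
as: `S` is maximal among the subsets of `C` inducing a connected subgraph in which no
vertex with two neighbors inside the subset is a neighbor of `x`. -/
def IsSector {V : Type*} (G : SimpleGraph V) (C : Set V) (x : V) (S : Set V) : Prop :=
  S ⊆ C ∧ (G.induce S).Connected ∧
  (∀ v ∈ S, (G.neighborSet v ∩ S).ncard = 2 → ¬ G.Adj x v) ∧
  (∀ T, S ⊆ T → T ⊆ C → (G.induce T).Connected →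
    (∀ v ∈ T, (G.neighborSet v ∩ T).ncard = 2 → ¬ G.Adj x v) → T = S)

/-- The interior of a sector of a wheel with center `x`: the sector minus its two
ends (which are spokes, i.e. neighbors of `x`). -/
def sectorInterior {V : Type*} (G : SimpleGraph V) (x : V) (S : Set V) : Set V :=
  S \ G.neighborSet x

/-- The wheel `(C, x)` is a proper wheel in `G`. -/
def IsProperWheel {V : Type*} (G : SimpleGraph V) (C : Set V) (x : V) : Prop :=
  IsWheel G C x ∧ ∀ v, v ∉ C → v ≠ x →
    (∃ S, IsSector G C x S ∧ G.neighborSet v ∩ C ⊆ S) ∧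
    (3 ≤ (G.neighborSet v ∩ C).ncard → G.Adj v x)

/-- The wheel `(C, x)` is a proper wheel in the subgraph of `G` induced by `A`. -/
def IsProperWheelOn {V : Type*} (G : SimpleGraph V) (A : Set V) (C : Set V) (x : V) : Prop :=
  C ⊆ A ∧ x ∈ A ∧ IsWheel G C x ∧
  ∀ v ∈ A, v ∉ C → v ≠ x →
    (∃ S, IsSector G C x S ∧ G.neighborSet v ∩ C ⊆ S) ∧
    (3 ≤ (G.neighborSet v ∩ C).ncard → G.Adj v x)

/-- `p` is an induced path in `G`. -/
def IsInducedPath {V : Type*} {u w : V} (G : SimpleGraph V) (p : G.Walk u w) : Prop :=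
  p.IsPath ∧ ∀ a ∈ p.support, ∀ b ∈ p.support, G.Adj a b → s(a, b) ∈ p.edges

/-- `K` is (the vertex set of) a connected component of the subgraph of `G` induced
by `A`. -/
def IsCompOf {V : Type*} (G : SimpleGraph V) (A : Set V) (K : Set V) : Prop :=
  K ⊆ A ∧ (G.induce K).Connected ∧ ∀ a ∈ K, ∀ b ∈ A, G.Adj a b → b ∈ K

/-- `x` is a non-offensive vertex for the wheel `(C, v)`. -/
def NonOffensive {V : Type*} (G : SimpleGraph V) (C : Set V) (v x : V) : Prop :=
  ∃ S1 S2 : Set V, IsSector G C v S1 ∧ IsSector G C v S2 ∧ S1 ≠ S2 ∧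
    (S1 ∩ S2).Nonempty ∧ G.Adj x v ∧
    (G.neighborSet x ∩ S1).Nonempty ∧ (G.neighborSet x ∩ S2).Nonempty ∧
    G.neighborSet x ∩ C ⊆ S1 ∪ S2 ∧
    ∀ u, u ∉ C → u ≠ v → G.Adj u x → G.neighborSet u ∩ C ⊆ S1 ∪ S2

/-- `x` is an `a`-non-offensive vertex for the wheel `(C, v)`: it is non-offensive,
witnessed by two consecutive sectors meeting exactly in `{a}`. -/
def ANonOffensive {V : Type*} (G : SimpleGraph V) (C : Set V) (v a x : V) : Prop :=
  ∃ S1 S2 : Set V, IsSector G C v S1 ∧ IsSector G C v S2 ∧ S1 ≠ S2 ∧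
    S1 ∩ S2 = {a} ∧ G.Adj x v ∧
    (G.neighborSet x ∩ S1).Nonempty ∧ (G.neighborSet x ∩ S2).Nonempty ∧
    G.neighborSet x ∩ C ⊆ S1 ∪ S2 ∧
    ∀ u, u ∉ C → u ≠ v → G.Adj u x → G.neighborSet u ∩ C ⊆ S1 ∪ S2

/-- The wheel `(C, v)` is `k`-almost proper, witnessed by the spokes `xs 0, …, xs (k-1)`
(no two of which lie in a common sector) and the set `X` of vertices outside the wheel:
the wheel is proper in `G \ X`, and every member of `X` is `xs i`-non-offensive for
some `i`. -/
def IsAlmostProperWheel {V : Type*} (G : SimpleGraph V) (C : Set V) (v : V) (k : ℕ)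
    (xs : Fin k → V) (X : Set V) : Prop :=
  IsWheel G C v ∧
  (∀ i, xs i ∈ G.neighborSet v ∩ C) ∧
  (∀ i j, i ≠ j → ¬ ∃ S, IsSector G C v S ∧ xs i ∈ S ∧ xs j ∈ S) ∧
  (∀ x ∈ X, x ∉ C ∧ x ≠ v) ∧
  (∀ u, u ∉ C → u ≠ v → u ∉ X →
    (∃ S, IsSector G C v S ∧ G.neighborSet u ∩ C ⊆ S) ∧
    (3 ≤ (G.neighborSet u ∩ C).ncard → G.Adj u v)) ∧
  (∀ x ∈ X, ∃ i, ANonOffensive G C v (xs i) x)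

/-- The induced subgraph on `S` is a subdivision of `K₁,₃` with `a`, `b`, `c` as its
vertices of degree one (equivalently, a tree whose set of leaves is exactly `{a, b, c}`). -/
def IsK13SubdivisionWithLeaves {V : Type*} (G : SimpleGraph V) (S : Set V) (a b c : V) : Prop :=
  a ∈ S ∧ b ∈ S ∧ c ∈ S ∧ a ≠ b ∧ a ≠ c ∧ b ≠ c ∧
  (G.induce S).Connected ∧ (G.induce S).IsAcyclic ∧
  ∀ v ∈ S, ((G.neighborSet v ∩ S).ncard = 1 ↔ v = a ∨ v = b ∨ v = c)

/-- Adjacency relation of the graph obtained from `G` by contracting the set `K`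
to the single new vertex `none`. -/
def contractAdj {V : Type*} (G : SimpleGraph V) (K : Set V) :
    Option {v : V // v ∉ K} → Option {v : V // v ∉ K} → Prop
  | some a, some b => G.Adj a.1 b.1
  | some a, none => ∃ k ∈ K, G.Adj a.1 k
  | none, some b => ∃ k ∈ K, G.Adj k b.1
  | none, none => False

/-- The graph obtained from `G` by contracting `K` to the single new vertex `none`
(deleting arising loops and parallel edges). -/
def contractSet {V : Type*} (G : SimpleGraph V) (K : Set V) :
    SimpleGraph (Option {v : V // v ∉ K}) where
  Adj := contractAdj G K
  symm := by
    refine ⟨?_⟩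
    intro a b h
    match a, b, h with
    | none, none, h => exact False.elim h
    | none, some b, ⟨k, hk, ha⟩ => exact ⟨k, hk, ha.symm⟩
    | some a, none, ⟨k, hk, ha⟩ => exact ⟨k, hk, ha.symm⟩
    | some a, some b, h => exact G.adj_symm h
  loopless := by
    refine ⟨?_⟩
    rintro (_ | a) h
    · exact False.elim h
    · exact G.irrefl h

/-!
Minimality makes every vertex `v ∉ {a, b, c}` of `G[S]` a cut vertex: otherwise `S \ {v}` would be
a smaller connected set. More precisely, some terminal is separated by `v` from any given
neighbour of `v`, hence from the rest of any cycle through `v`. Two vertices of one cycle cannot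
separate the same terminal, and the terminals, having degree one, lie on no cycle; so a cycle of
`G[S]` has at most three vertices, i.e. it is a triangle. Finally a vertex of degree one in `G[S]`
can be deleted without disconnecting, so the leaves of `G[S]` are exactly `a`, `b`, `c`.
-/

namespace SimpleGraph

section Minimal

variable {W : Type*} {H : SimpleGraph W}

structure MinimallyConnects (H : SimpleGraph W) (L : Finset W) : Prop where
  connected : H.Connected
  eq_univ_of_connected : ∀ T : Set W, ↑L ⊆ T → (H.induce T).Connected → T = Set.univ

lemma connected_induce_insert_setOf_walk_notMem_support {v w : W} (hvw : H.Adj v w) :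
    (H.induce (insert v {x | ∃ p : H.Walk w x, v ∉ p.support})).Connected := by
  classical
  refine induce_connected_of_patches v (Set.mem_insert _ _) fun {x} hx => ?_
  rcases hx with rfl | ⟨p, hp⟩
  · exact ⟨{x}, by simp, rfl, rfl, Reachable.refl _⟩
  · let q := p.cons hvw
    refine ⟨{z | z ∈ q.support}, ?_, q.start_mem_support, q.end_mem_support,
      q.connected_induce_support.preconnected _ _⟩
    intro z hz
    rcases (Walk.mem_support_iff q).1 hz with rfl | hz
    · exact Set.mem_insert _ _
    · exact Or.inr ⟨p.takeUntil z hz, fun h => hp (p.support_takeUntil_subset_support hz h)⟩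

namespace MinimallyConnects

variable {L : Finset W}

lemma not_connected_induce_compl_singleton (hL : H.MinimallyConnects L) {v : W} (hvL : v ∉ L) :
    ¬ (H.induce {v}ᶜ).Connected := fun hconn => by
  have h := hL.eq_univ_of_connected {v}ᶜ (fun ℓ hℓ hℓv => hvL (hℓv ▸ hℓ)) hconn
  exact (h ▸ Set.mem_univ v : v ∈ ({v}ᶜ : Set W)) rfl

lemma ncard_neighborSet_ne_one (hL : H.MinimallyConnects L) {v : W} (hvL : v ∉ L) :
    (H.neighborSet v).ncard ≠ 1 := by
  intro h
  have : Fintype (H.neighborSet v) := (Set.finite_of_ncard_pos (h ▸ one_pos)).fintype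
  have hdeg : H.degree v = 1 := by
    rwa [← card_neighborSet_eq_degree, ← Set.toFinset_card, ← Set.ncard_eq_toFinset_card']
  exact hL.not_connected_induce_compl_singleton hvL
    (hL.connected.induce_compl_singleton_of_degree_eq_one hdeg)

lemma exists_mem_forall_walk_mem_support (hL : H.MinimallyConnects L) {v w : W} (hvL : v ∉ L)
    (hvw : H.Adj v w) :
    ∃ ℓ ∈ L, ∀ p : H.Walk w ℓ, v ∈ p.support := by
  by_contra! h
  -- The vertices reachable from `w` avoiding `v`, together with `v`, form a connected set
  -- containing `L`; so they are everything, and `H - v` is connected.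
  have hR : insert v {x | ∃ p : H.Walk w x, v ∉ p.support} = Set.univ :=
    hL.eq_univ_of_connected _ (fun ℓ hℓ => Or.inr (h ℓ hℓ))
      (connected_induce_insert_setOf_walk_notMem_support hvw)
  refine hL.not_connected_induce_compl_singleton hvL ?_
  rw [connected_iff_exists_forall_reachable]
  refine ⟨⟨w, hvw.ne'⟩, fun ⟨x, hx⟩ => ?_⟩
  have hxR : x ∈ insert v {x | ∃ p : H.Walk w x, v ∉ p.support} := hR ▸ Set.mem_univ x
  obtain ⟨p, hp⟩ := hxR.resolve_left hx
  exact ⟨p.induce {v}ᶜ fun z hz hzv => hp (hzv ▸ hz)⟩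

lemma exists_mem_forall_walk_to_cycle_mem_support (hL : H.MinimallyConnects L) {u v : W}
    {c : H.Walk u u} (hc : c.IsCycle) (hv : v ∈ c.support) (hvL : v ∉ L) :
    ∃ ℓ ∈ L, ∀ x ∈ c.support, x ≠ v → ∀ p : H.Walk ℓ x, v ∈ p.support := by
  classical
  set d := c.rotate v hv
  have hd : d.IsCycle := (Walk.isCycle_rotate hv).2 hc
  have hpath : d.tail.IsPath := by
    rw [← d.cons_tail_eq hd.not_nil, Walk.cons_isCycle_iff] at hd
    exact hd.1
  obtain ⟨ℓ, hℓL, hℓ⟩ := hL.exists_mem_forall_walk_mem_support hvL (d.adj_snd hd.not_nil)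
  refine ⟨ℓ, hℓL, fun x hx hxv p => by_contra fun hvp => ?_⟩
  have hxd : x ∈ d.tail.support := by
    rw [← c.mem_support_rotate_iff v hv, ← d.cons_support_tail hd.not_nil] at hx
    exact (List.mem_cons.1 hx).resolve_left hxv
  have hvq := Walk.endpoint_notMem_support_takeUntil hpath hxd hxv.symm
  have := hℓ ((d.tail.takeUntil x hxd).append p.reverse)
  rw [Walk.mem_support_append_iff, Walk.support_reverse, List.mem_reverse] at this
  exact this.elim hvq hvp

lemma length_le_card_of_isCycle (hL : H.MinimallyConnects L) {u : W} {c : H.Walk u u}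
    (hc : c.IsCycle) (hcL : ∀ x ∈ c.support, x ∉ L) : c.length ≤ L.card := by
  classical
  choose! f hfL hf using fun x (hx : x ∈ c.support) =>
    hL.exists_mem_forall_walk_to_cycle_mem_support hc hx (hcL x hx)
  have htail : ∀ x ∈ c.support.tail, x ∈ c.support := fun x hx => List.mem_of_mem_tail hx
  calc c.length = c.support.tail.toFinset.card := by
        rw [List.toFinset_card_of_nodup hc.support_nodup, List.length_tail, Walk.length_support,
          Nat.add_sub_cancel]
    _ ≤ L.card := by
      refine Finset.card_le_card_of_injOn f (fun x hx => hfL x (htail x (List.mem_toFinset.1 hx)))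
        fun x hx y hy hfxy => by_contra fun hxy => ?_
      have hx' := htail x (List.mem_toFinset.1 hx)
      have hy' := htail y (List.mem_toFinset.1 hy)
      -- A path from the common terminal to `x` either meets `y` or avoids it.
      obtain ⟨q, hq⟩ := hL.connected.exists_isPath (f x) x
      by_cases hyq : y ∈ q.support
      · exact Walk.endpoint_notMem_support_takeUntil hq hyq hxy
          (hf x hx' y hy' (Ne.symm hxy) (q.takeUntil y hyq))
      · exact hyq (by simpa using hf y hy' x hx' hxy (q.copy hfxy rfl))

end MinimallyConnects

end Minimal

section Induce

variable {V : Type*} {G : SimpleGraph V} {S : Set V}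

lemma ncard_neighborSet_induce (v : S) :
    ((G.induce S).neighborSet v).ncard = (G.neighborSet v ∩ S).ncard := by
  rw [← Set.ncard_image_of_injective _ Subtype.val_injective]
  congr 1
  ext x
  simp [and_comm]

lemma minimallyConnects_induce {L : Finset S} (hS : (G.induce S).Connected)
    (hmin : ∀ T ⊆ S, (∀ ℓ ∈ L, (ℓ : V) ∈ T) → (G.induce T).Connected → T = S) :
    (G.induce S).MinimallyConnects L := by
  refine ⟨hS, fun T hLT hT => ?_⟩
  let f := (Embedding.induce S).comp (Embedding.induce T : (G.induce S).induce T ↪g _)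
  have hrange := hmin (Set.range f) (by rintro _ ⟨x, rfl⟩; exact x.1.2)
    (fun ℓ hℓ => ⟨⟨ℓ, hLT hℓ⟩, rfl⟩) ((f.isoInduceRange).connected_iff.1 hT)
  refine Set.eq_univ_of_forall fun x => ?_
  have hx : (x : V) ∈ Set.range f := hrange.symm ▸ x.2
  obtain ⟨⟨y, hyT⟩, hy⟩ := hx
  rwa [← Subtype.ext hy]

lemma ncard_neighborSet_inter_eq_one (hS : (G.induce S).Connected) {u v : V} (hu : u ∈ S)
    (hv : v ∈ S) (huv : u ≠ v) (hdeg : (G.neighborSet u).ncard = 1) :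
    (G.neighborSet u ∩ S).ncard = 1 := by
  have hfin : (G.neighborSet u).Finite := Set.finite_of_ncard_pos (by omega)
  have hle : (G.neighborSet u ∩ S).ncard ≤ 1 :=
    hdeg ▸ Set.ncard_le_ncard Set.inter_subset_left hfin
  obtain ⟨p, -⟩ := hS.exists_isPath ⟨u, hu⟩ ⟨v, hv⟩
  have hp : ¬ p.Nil := Walk.not_nil_of_ne fun h => huv (congrArg Subtype.val h)
  have hpos : 0 < (G.neighborSet u ∩ S).ncard :=
    (Set.ncard_pos (hfin.subset Set.inter_subset_left)).2 ⟨_, p.adj_snd hp, p.snd.2⟩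
  omega

lemma notMem_support_of_ncard_neighborSet_eq_one {u : S} {c : (G.induce S).Walk u u}
    (hc : c.IsCycle) {x : S} (hx : (G.neighborSet x).ncard = 1) : x ∉ c.support := fun hxc => by
  have hfin : (G.neighborSet x).Finite := Set.finite_of_ncard_pos (by omega)
  have := calc
    2 = (c.toSubgraph.neighborSet x).ncard := (hc.ncard_neighborSet_toSubgraph_eq_two hxc).symm
    _ ≤ ((G.induce S).neighborSet x).ncard :=
      Set.ncard_le_ncard (c.toSubgraph.neighborSet_subset x)
        (hfin.preimage Subtype.val_injective.injOn)
    _ = (G.neighborSet x ∩ S).ncard := ncard_neighborSet_induce x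
    _ ≤ (G.neighborSet x).ncard := Set.ncard_le_ncard Set.inter_subset_left hfin
  omega

end Induce

end SimpleGraph

theorem tree_connecting_general {V : Type*} (G : SimpleGraph V)
    (a b c : V) (hab : a ≠ b) (hac : a ≠ c) (hbc : b ≠ c)
    (ha : (G.neighborSet a).ncard = 1) (hb : (G.neighborSet b).ncard = 1)
    (hc : (G.neighborSet c).ncard = 1)
    (S : Set V) (haS : a ∈ S) (hbS : b ∈ S) (hcS : c ∈ S)
    (hSconn : (G.induce S).Connected)
    (hmin : ∀ T, T ⊆ S → a ∈ T → b ∈ T → c ∈ T → (G.induce T).Connected → T = S) :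
    IsK13SubdivisionWithLeaves G S a b c ∨
    ∃ p q r, p ∈ S ∧ q ∈ S ∧ r ∈ S ∧ G.Adj p q ∧ G.Adj q r ∧ G.Adj p r := by
  classical
  set L : Finset S := {⟨a, haS⟩, ⟨b, hbS⟩, ⟨c, hcS⟩}
  have hL : (G.induce S).MinimallyConnects L := minimallyConnects_induce hSconn fun T hTS hLT =>
    hmin T hTS (hLT ⟨a, haS⟩ (by simp [L])) (hLT ⟨b, hbS⟩ (by simp [L]))
      (hLT ⟨c, hcS⟩ (by simp [L]))
  have hleaf : ∀ ℓ ∈ L, (G.neighborSet ℓ).ncard = 1 := by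
    simp only [L, Finset.mem_insert, Finset.mem_singleton]
    rintro ℓ (rfl | rfl | rfl) <;> assumption
  refine or_iff_not_imp_right.2 fun htri =>
    ⟨haS, hbS, hcS, hab, hac, hbc, hSconn, ?_, fun v hv => ⟨fun hv1 => ?_, ?_⟩⟩
  · intro u C hC
    have hlen := hL.length_le_card_of_isCycle hC fun x hx hxL =>
      notMem_support_of_ncard_neighborSet_eq_one hC (hleaf x hxL) hx
    have h3 : C.length = 3 := le_antisymm (hlen.trans Finset.card_le_three) hC.three_le_length
    obtain ⟨s, hs⟩ := is3Clique_iff_exists_cycle_length_three.2 ⟨u, C, hC, h3⟩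
    obtain ⟨p, q, r, hpq, hpr, hqr, -⟩ := is3Clique_iff.1 hs
    exact htri ⟨p, q, r, p.2, q.2, r.2, hpq, hqr, hpr⟩
  · by_contra hvL
    refine hL.ncard_neighborSet_ne_one (v := ⟨v, hv⟩) (by simpa [L] using hvL) ?_
    rwa [ncard_neighborSet_induce]
  · rintro (rfl | rfl | rfl)
    exacts [ncard_neighborSet_inter_eq_one hSconn haS hbS hab ha,
      ncard_neighborSet_inter_eq_one hSconn hbS haS hab.symm hb,
      ncard_neighborSet_inter_eq_one hSconn hcS haS hac.symm hc]

/-- In a connected graph `G` with three vertices `a`, `b`, `c` of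
degree one, a minimal connected induced subgraph containing `a`, `b`, `c` is either a
subdivision of `K₁,₃` with `a`, `b`, `c` as the vertices of degree one, or contains a
triangle. -/
theorem tree_connecting {V : Type*} [Fintype V] (G : SimpleGraph V)
    (hconn : G.Connected)
    (a b c : V) (hab : a ≠ b) (hac : a ≠ c) (hbc : b ≠ c)
    (ha : (G.neighborSet a).ncard = 1) (hb : (G.neighborSet b).ncard = 1)
    (hc : (G.neighborSet c).ncard = 1)
    (S : Set V) (haS : a ∈ S) (hbS : b ∈ S) (hcS : c ∈ S)
    (hSconn : (G.induce S).Connected)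
    (hmin : ∀ T, T ⊆ S → a ∈ T → b ∈ T → c ∈ T → (G.induce T).Connected → T = S) :
    IsK13SubdivisionWithLeaves G S a b c ∨
    ∃ p q r, p ∈ S ∧ q ∈ S ∧ r ∈ S ∧ G.Adj p q ∧ G.Adj q r ∧ G.Adj p r :=
  tree_connecting_general G a b c hab hac hbc ha hb hc S haS hbS hcS hSconn hmin
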